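/- If N is a Nelson algebra and P is a prime filter of N with P ⊆ φ(P) (where φ(P) is the complement of ∼P), then P is an irreducible deductive system. Hence the irreducible deductive systems of N are exactly the prime filters P with P ⊆ φ(P). -/
import Mathlib


/-- A Nelson algebra: a distributive lattice (axioms N1, N2) with a De Morgan
involution `tilde` (N3, N4), the Kleene condition (N5), and a weak implication
`imp` satisfying (N6)-(N8). -/
class NelsonAlgebra (N : Type*) extends DistribLattice N where
  one : N
  tilde : N → N
  imp : N → N → N
  tilde_tilde : ∀ x : N, tilde (tilde x) = x
  tilde_sup : ∀ x y : N, tilde (x ⊔ y) = tilde x ⊓ tilde y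
  kleene : ∀ x y : N, x ⊓ tilde x = (x ⊓ tilde x) ⊓ (y ⊔ tilde y)
  imp_self : ∀ x : N, imp x x = one
  imp_imp : ∀ x y z : N, imp x (imp y z) = imp (x ⊓ y) z
  inf_imp : ∀ x y : N, x ⊓ imp x y = x ⊓ (tilde x ⊔ y)

open NelsonAlgebra

/-- A deductive system: contains 1 and is closed under modus ponens. -/
def IsDeductiveSystem {N : Type*} [NelsonAlgebra N] (D : Set N) : Prop :=
  NelsonAlgebra.one ∈ D ∧ ∀ x y : N, x ∈ D → imp x y ∈ D → y ∈ D

/-- A lattice filter: contains 1, upward closed, closed under meets. -/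
def IsLatticeFilter {N : Type*} [NelsonAlgebra N] (F : Set N) : Prop :=
  NelsonAlgebra.one ∈ F ∧ (∀ x y : N, x ∈ F → x ≤ y → y ∈ F) ∧
    ∀ x y : N, x ∈ F → y ∈ F → x ⊓ y ∈ F

/-- A prime filter: a proper lattice filter such that x ⊔ y ∈ F implies
x ∈ F or y ∈ F. -/
def IsPrimeFilter {N : Type*} [NelsonAlgebra N] (F : Set N) : Prop :=
  IsLatticeFilter F ∧ F ≠ Set.univ ∧ ∀ x y : N, x ⊔ y ∈ F → x ∈ F ∨ y ∈ F

/-- An irreducible deductive system. -/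
def IsIrreducibleDS {N : Type*} [NelsonAlgebra N] (D : Set N) : Prop :=
  IsDeductiveSystem D ∧ D ≠ Set.univ ∧
    ∀ D₁ D₂ : Set N, IsDeductiveSystem D₁ → IsDeductiveSystem D₂ →
      D = D₁ ∩ D₂ → D = D₁ ∨ D = D₂

section NelsonAux

variable {N : Type*} [NelsonAlgebra N]

lemma nls_tilde_anti {x y : N} (h : x ≤ y) : tilde y ≤ tilde x := by
  have h1 : tilde (x ⊔ y) = tilde x ⊓ tilde y := tilde_sup x y
  rw [sup_eq_right.mpr h] at h1
  rw [h1]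
  exact inf_le_left

lemma nls_le_one (x : N) : x ≤ (one : N) := by
  have h := inf_imp x x
  rw [NelsonAlgebra.imp_self] at h
  have h2 : x ⊓ (tilde x ⊔ x) = x := inf_eq_left.mpr le_sup_right
  rw [h2] at h
  exact inf_eq_left.mp h

lemma nls_bot_le (x : N) : tilde (one : N) ≤ x := by
  have := nls_tilde_anti (nls_le_one (tilde x))
  rwa [tilde_tilde] at this

lemma nls_imp_one (x : N) : imp x (one : N) = one := by
  have h := imp_imp x (tilde (one : N)) (tilde (one : N))
  rw [NelsonAlgebra.imp_self, inf_eq_right.mpr (nls_bot_le x), NelsonAlgebra.imp_self] at h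
  exact h

lemma nls_key (x y : N) : imp (x ⊓ (tilde x ⊔ y)) y = one := by
  have h := imp_imp (imp x y) x y
  rw [NelsonAlgebra.imp_self, inf_comm (imp x y) x, inf_imp] at h
  exact h.symm

lemma nls_imp_mono {u v y : N} (huv : u ≤ v) (h : imp v y = one) : imp u y = one := by
  have h2 := imp_imp u v y
  rw [h, nls_imp_one, inf_eq_left.mpr huv] at h2
  exact h2.symm

lemma nls_imp_eq_one_iff {e y : N} : imp e y = one ↔ e ≤ tilde e ⊔ y := by
  constructor
  · intro h
    have h2 := inf_imp e y
    rw [h, inf_eq_left.mpr (nls_le_one e)] at h2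
    exact h2.le.trans inf_le_right
  · intro h
    exact nls_imp_mono (le_inf le_rfl h) (nls_key e y)

lemma nls_le_imp {x y : N} (h : x ≤ y) : imp x y = one :=
  nls_imp_eq_one_iff.mpr (h.trans le_sup_right)

lemma nls_kleene_le (x y : N) : x ⊓ tilde x ≤ y ⊔ tilde y :=
  (kleene x y).le.trans inf_le_right

lemma nls_tilde_inf (x y : N) : tilde (x ⊓ y) = tilde x ⊔ tilde y := by
  have h := tilde_sup (tilde x) (tilde y)
  rw [tilde_tilde, tilde_tilde] at h
  rw [← h, tilde_tilde]

lemma nls_QG {g m y : N} (hm1 : m ≤ tilde m) (hm2 : ∀ s : N, m ≤ s ⊔ tilde s)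
    (H : g ≤ tilde g ⊔ m ⊔ y) : g ≤ tilde g ⊔ y := by
  have key : g ⊓ m ⊓ tilde y ≤ tilde g := by
    have h0 := nls_tilde_anti H
    rw [tilde_sup, tilde_sup, tilde_tilde] at h0
    calc g ⊓ m ⊓ tilde y ≤ g ⊓ tilde m ⊓ tilde y :=
          inf_le_inf_right _ (inf_le_inf_left _ hm1)
      _ ≤ tilde g := h0
  have h3 : m ≤ (g ⊓ tilde y) ⊔ (tilde g ⊔ y) := by
    have h := hm2 (g ⊓ tilde y)
    rwa [nls_tilde_inf, tilde_tilde] at h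
  have hgm : g ⊓ m ≤ tilde g ⊔ y := by
    have h4 : g ⊓ m ≤ ((g ⊓ m) ⊓ (g ⊓ tilde y)) ⊔ ((g ⊓ m) ⊓ (tilde g ⊔ y)) :=
      (le_inf le_rfl (inf_le_right.trans h3)).trans (inf_sup_left _ _ _).le
    refine h4.trans (sup_le ?_ inf_le_right)
    have : (g ⊓ m) ⊓ (g ⊓ tilde y) ≤ g ⊓ m ⊓ tilde y :=
      le_inf inf_le_left (inf_le_right.trans inf_le_right)
    exact (this.trans key).trans le_sup_left
  have H2 : g ≤ (tilde g ⊔ y) ⊔ m := H.trans (sup_right_comm (tilde g) m y).le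
  have h5 : g ≤ (g ⊓ (tilde g ⊔ y)) ⊔ (g ⊓ m) :=
    (le_inf le_rfl H2).trans (inf_sup_left _ _ _).le
  exact h5.trans (sup_le inf_le_right hgm)

lemma nls_m_le (x : N) : x ⊓ tilde x ≤ tilde (x ⊓ tilde x) := by
  rw [nls_tilde_inf, tilde_tilde]
  exact (nls_kleene_le x x).trans (sup_comm x (tilde x)).le

lemma ds_filter {D : Set N} (hD : IsDeductiveSystem D) : IsLatticeFilter D := by
  refine ⟨hD.1, fun x y hx hxy => hD.2 x y hx ?_, fun x y hx hy => ?_⟩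
  · rw [nls_le_imp hxy]; exact hD.1
  · have h1 : imp x (imp y (x ⊓ y)) = one := by rw [imp_imp]; exact NelsonAlgebra.imp_self _
    exact hD.2 y _ hy (hD.2 x _ hx (by rw [h1]; exact hD.1))

lemma ds_mp2 {D : Set N} (hD : IsDeductiveSystem D) {x y : N} (hx : x ∈ D)
    (h : tilde x ⊔ y ∈ D) : y ∈ D := by
  have hf := ds_filter hD
  have hm : x ⊓ (tilde x ⊔ y) ∈ D := hf.2.2 _ _ hx h
  exact hD.2 _ y hm (by rw [nls_key]; exact hD.1)

lemma nls_imp_sup {u v y : N} (hu : imp u y = one) (hv : imp v y = one) :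
    imp (u ⊔ v) y = one := by
  rw [nls_imp_eq_one_iff] at hu hv ⊢
  apply nls_QG (m := (u ⊓ tilde u) ⊔ (v ⊓ tilde v))
  · rw [tilde_sup, nls_tilde_inf, nls_tilde_inf, tilde_tilde, tilde_tilde]
    refine sup_le (le_inf ?_ ?_) (le_inf ?_ ?_)
    · exact (nls_kleene_le u u).trans (sup_comm u (tilde u)).le
    · exact (nls_kleene_le u v).trans (sup_comm v (tilde v)).le
    · exact (nls_kleene_le v u).trans (sup_comm u (tilde u)).le
    · exact (nls_kleene_le v v).trans (sup_comm v (tilde v)).le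
  · exact fun s => sup_le (nls_kleene_le u s) (nls_kleene_le v s)
  · refine sup_le ?_ ?_
    · have h1 : u ≤ (u ⊓ tilde u) ⊔ (u ⊓ y) :=
        (le_inf le_rfl hu).trans (inf_sup_left u (tilde u) y).le
      refine h1.trans (sup_le ?_ ?_)
      · exact le_sup_left.trans (le_sup_right.trans le_sup_left)
      · exact inf_le_right.trans le_sup_right
    · have h1 : v ≤ (v ⊓ tilde v) ⊔ (v ⊓ y) :=
        (le_inf le_rfl hv).trans (inf_sup_left v (tilde v) y).le
      refine h1.trans (sup_le ?_ ?_)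
      · exact le_sup_right.trans (le_sup_right.trans le_sup_left)
      · exact inf_le_right.trans le_sup_right

lemma gen_ds (c : N) {D : Set N} (hD : IsDeductiveSystem D) :
    IsDeductiveSystem {y : N | ∃ d ∈ D, imp (c ⊓ d) y = one} := by
  constructor
  · exact ⟨one, hD.1, nls_imp_one _⟩
  · rintro x y ⟨d, hd, hdx⟩ ⟨e, he, hey⟩
    refine ⟨d ⊓ e, (ds_filter hD).2.2 _ _ hd he, ?_⟩
    rw [imp_imp] at hey
    rw [nls_imp_eq_one_iff] at hdx hey ⊢
    set g := c ⊓ (d ⊓ e) with hgdef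
    have hg1 : g ≤ c ⊓ d := le_inf inf_le_left (inf_le_right.trans inf_le_left)
    have hg2 : g ≤ c ⊓ e := le_inf inf_le_left (inf_le_right.trans inf_le_right)
    have step1 : g ≤ tilde g ⊔ x :=
      (hg1.trans hdx).trans (sup_le_sup_right (nls_tilde_anti hg1) x)
    have step2 : g ⊓ x ≤ tilde g ⊔ (tilde x ⊔ y) := by
      have h6 : g ⊓ x ≤ (c ⊓ e) ⊓ x := inf_le_inf_right x hg2
      refine (h6.trans hey).trans ?_
      rw [nls_tilde_inf, sup_assoc]
      exact sup_le_sup_right (nls_tilde_anti hg2) _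
    have hB : g ⊓ x ≤ (tilde g ⊔ (x ⊓ tilde x)) ⊔ y := by
      have h5 : g ⊓ x ≤ ((g ⊓ x) ⊓ tilde g) ⊔ ((g ⊓ x) ⊓ (tilde x ⊔ y)) :=
        (le_inf le_rfl step2).trans (inf_sup_left _ _ _).le
      refine h5.trans (sup_le ?_ ?_)
      · exact inf_le_right.trans (le_sup_left.trans le_sup_left)
      · have h7 : (g ⊓ x) ⊓ (tilde x ⊔ y) ≤ ((g ⊓ x) ⊓ tilde x) ⊔ ((g ⊓ x) ⊓ y) :=
          (inf_sup_left _ _ _).le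
        refine h7.trans (sup_le ?_ ?_)
        · exact (le_inf (inf_le_left.trans inf_le_right) inf_le_right).trans
            (le_sup_right.trans le_sup_left)
        · exact inf_le_right.trans le_sup_right
    have step3 : g ≤ tilde g ⊔ (x ⊓ tilde x) ⊔ y := by
      have hA : g ≤ (g ⊓ tilde g) ⊔ (g ⊓ x) :=
        (le_inf le_rfl step1).trans (inf_sup_left g (tilde g) x).le
      refine hA.trans (sup_le ?_ hB)
      exact inf_le_right.trans (le_sup_left.trans le_sup_left)
    exact nls_QG (nls_m_le x) (fun s => nls_kleene_le x s) step3

lemma prime_part1 {P : Set N} (hP : IsPrimeFilter P) (hsub : P ⊆ (tilde '' P)ᶜ) :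
    IsIrreducibleDS P := by
  obtain ⟨⟨h1, hup, hinf⟩, hproper, hprime⟩ := hP
  have hds : IsDeductiveSystem P := by
    refine ⟨h1, fun x y hx hxy => ?_⟩
    have hm : x ⊓ imp x y ∈ P := hinf _ _ hx hxy
    rw [inf_imp, inf_sup_left] at hm
    rcases hprime _ _ hm with h | h
    · exfalso
      have hnx : tilde x ∈ P := hup _ _ h inf_le_right
      exact hsub hx ⟨tilde x, hnx, tilde_tilde x⟩
    · exact hup _ _ h inf_le_right
  refine ⟨hds, hproper, fun D₁ D₂ hD1 hD2 heq => ?_⟩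
  by_contra hc
  push_neg at hc
  obtain ⟨hc1, hc2⟩ := hc
  have hsub1 : P ⊆ D₁ := fun z hz => (heq ▸ hz : z ∈ D₁ ∩ D₂).1
  have hsub2 : P ⊆ D₂ := fun z hz => (heq ▸ hz : z ∈ D₁ ∩ D₂).2
  obtain ⟨a, haD, haP⟩ := Set.not_subset.mp (fun h => hc1 (Set.Subset.antisymm hsub1 h))
  obtain ⟨b, hbD, hbP⟩ := Set.not_subset.mp (fun h => hc2 (Set.Subset.antisymm hsub2 h))
  have hjoin : a ⊔ b ∈ P := by
    rw [heq]
    exact ⟨(ds_filter hD1).2.1 a _ haD le_sup_left, (ds_filter hD2).2.1 b _ hbD le_sup_right⟩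
  rcases hprime _ _ hjoin with h | h
  · exact haP h
  · exact hbP h

lemma irred_part2 {D : Set N} (hD : IsIrreducibleDS D) :
    IsPrimeFilter D ∧ D ⊆ (tilde '' D)ᶜ := by
  obtain ⟨hds, hproper, hirr⟩ := hD
  have hf := ds_filter hds
  have hphi : D ⊆ (tilde '' D)ᶜ := by
    intro x hx hmem
    obtain ⟨p, hp, hpx⟩ := hmem
    have hnx : tilde x ∈ D := by rw [← hpx, tilde_tilde]; exact hp
    apply hproper
    ext z
    simp only [Set.mem_univ, iff_true]
    exact ds_mp2 hds hx (hf.2.1 _ _ hnx le_sup_left)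
  refine ⟨⟨hf, hproper, fun a b hab => ?_⟩, hphi⟩
  by_contra hc
  push_neg at hc
  obtain ⟨ha, hb⟩ := hc
  have hds1 := gen_ds a hds
  have hds2 := gen_ds b hds
  have heq : D = {y : N | ∃ d ∈ D, imp (a ⊓ d) y = one} ∩
      {y : N | ∃ d ∈ D, imp (b ⊓ d) y = one} := by
    apply Set.Subset.antisymm
    · intro z hz
      exact ⟨⟨z, hz, nls_le_imp inf_le_right⟩, ⟨z, hz, nls_le_imp inf_le_right⟩⟩
    · rintro z ⟨⟨d, hd, hdz⟩, ⟨e, he, hez⟩⟩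
      have hfD : d ⊓ e ∈ D := hf.2.2 _ _ hd he
      have h1 : imp (a ⊓ (d ⊓ e)) z = one :=
        nls_imp_mono (inf_le_inf_left a inf_le_left) hdz
      have h2 : imp (b ⊓ (d ⊓ e)) z = one :=
        nls_imp_mono (inf_le_inf_left b inf_le_right) hez
      have hj : imp ((a ⊔ b) ⊓ (d ⊓ e)) z = one := by
        rw [inf_sup_right]
        exact nls_imp_sup h1 h2
      have hmemD : (a ⊔ b) ⊓ (d ⊓ e) ∈ D := hf.2.2 _ _ hab hfD
      exact hds.2 _ z hmemD (by rw [hj]; exact hds.1)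
  rcases hirr _ _ hds1 hds2 heq with h | h
  · exact ha (h ▸ ⟨one, hds.1, by rw [inf_eq_left.mpr (nls_le_one a), NelsonAlgebra.imp_self]⟩ :
      a ∈ D)
  · exact hb (h ▸ ⟨one, hds.1, by rw [inf_eq_left.mpr (nls_le_one b), NelsonAlgebra.imp_self]⟩ :
      b ∈ D)

end NelsonAux

theorem prime_below_phi_is_irreducible {N : Type*} [NelsonAlgebra N] :
    (∀ P : Set N, IsPrimeFilter P → P ⊆ (tilde '' P)ᶜ → IsIrreducibleDS P) ∧
    {D : Set N | IsIrreducibleDS D} =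
      {P : Set N | IsPrimeFilter P ∧ P ⊆ (tilde '' P)ᶜ} := by
  constructor
  · exact fun P hP hsub => prime_part1 hP hsub
  · ext D
    simp only [Set.mem_setOf_eq]
    exact ⟨fun h => irred_part2 h, fun h => prime_part1 h.1 h.2⟩
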